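/- arXiv:2002.04060 — 3 statements merged into one kernel-verified Lean document; each statement's English description precedes it below -/
import Mathlib

section
/- For every dimension d ≥ 1, every function f ∈ L¹(I_d) and every ε > 0, there exist an integer n ≥ 1, output weights α_1, …, α_n ∈ ℝ, input weight vectors w_1, …, w_n ∈ ℝ^d and biases b_1, …, b_n ∈ ℝ such that the single-hidden-layer ReLU network g(x) = Σ_{j=1}^n α_j · ReLU(w_jᵀ x + b_j) satisfies ∫_{I_d} |g(x) − f(x)| dx < ε. In other words, finite sums of the form Σ_j α_j ReLU(w_jᵀ x + b_j) are dense in L¹(I_d). -/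
/-!
The exponentials `exp ∘ ℓ` of the linear forms `ℓ x = ∑ k, w k * x k` on a compact set
`K ⊆ ℝ^d` form a multiplicative monoid that separates points, so by Stone–Weierstrass their
linear span is dense in `C(K, ℝ)`. Each `exp ∘ ℓ` is in turn a uniform limit of combinations of
`ReLU (a * ℓ + b)`: on a compact interval containing `ℓ(K)`, the piecewise-linear interpolant
of `exp` at equally spaced nodes is a sum of ramps `ReLU t - ReLU (t - 1)`. Hence ReLU networks
are uniformly dense in `C(K, ℝ)`. As continuous functions are dense in `L¹(I_d)` and `I_d` has
volume one, uniformly approximating a continuous `L¹`-approximant of `f` gives the theorem.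
-/

open MeasureTheory

/-- ReLU activation: `ReLU t = max t 0`. -/
noncomputable def ReLU (t : ℝ) : ℝ := max t 0

open Set

@[fun_prop]
lemma continuous_ReLU : Continuous ReLU := continuous_id.max continuous_const

lemma ReLU_of_nonneg {t : ℝ} (h : 0 ≤ t) : ReLU t = t := max_eq_left h

lemma ReLU_of_nonpos {t : ℝ} (h : t ≤ 0) : ReLU t = 0 := max_eq_right h

noncomputable def ramp (t : ℝ) : ℝ := ReLU t - ReLU (t - 1)

lemma ramp_of_nonpos {t : ℝ} (h : t ≤ 0) : ramp t = 0 := by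
  rw [ramp, ReLU_of_nonpos h, ReLU_of_nonpos (by linarith), sub_zero]

lemma ramp_of_one_le {t : ℝ} (h : 1 ≤ t) : ramp t = 1 := by
  rw [ramp, ReLU_of_nonneg (by linarith), ReLU_of_nonneg (by linarith)]
  ring

lemma ramp_of_mem_Icc {t : ℝ} (h : t ∈ Icc (0 : ℝ) 1) : ramp t = t := by
  rw [ramp, ReLU_of_nonneg h.1, ReLU_of_nonpos (by linarith [h.2]), sub_zero]

section
variable {X : Type*} [TopologicalSpace X]

noncomputable def reluRidge (ℓ : C(X, ℝ)) (b : ℝ) : C(X, ℝ) :=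
  ⟨fun x => ReLU (ℓ x + b), by fun_prop⟩

@[simp]
lemma reluRidge_apply (ℓ : C(X, ℝ)) (b : ℝ) (x : X) : reluRidge ℓ b x = ReLU (ℓ x + b) := rfl

noncomputable def reluSpan (L : Submodule ℝ C(X, ℝ)) : Submodule ℝ C(X, ℝ) :=
  Submodule.span ℝ (image2 reluRidge L univ)

lemma reluRidge_mem_reluSpan {L : Submodule ℝ C(X, ℝ)} {ℓ : C(X, ℝ)} (hℓ : ℓ ∈ L) (b : ℝ) :
    reluRidge ℓ b ∈ reluSpan L :=
  Submodule.subset_span (mem_image2_of_mem hℓ (mem_univ b))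

end

noncomputable def rampAt (c h : ℝ) : C(ℝ, ℝ) :=
  reluRidge (h⁻¹ • ContinuousMap.id ℝ) (-c / h) - reluRidge (h⁻¹ • ContinuousMap.id ℝ) (-c / h - 1)

lemma rampAt_apply (c h u : ℝ) : rampAt c h u = ramp ((u - c) / h) := by
  simp only [rampAt, ramp, ContinuousMap.sub_apply, reluRidge_apply, ContinuousMap.smul_apply,
    ContinuousMap.id_apply, smul_eq_mul]
  ring_nf

lemma rampAt_mem_reluSpan (c h : ℝ) : rampAt c h ∈ reluSpan (ℝ ∙ ContinuousMap.id ℝ) :=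
  sub_mem (reluRidge_mem_reluSpan (Submodule.smul_mem _ _ (Submodule.mem_span_singleton_self _)) _)
    (reluRidge_mem_reluSpan (Submodule.smul_mem _ _ (Submodule.mem_span_singleton_self _)) _)

lemma sum_range_sub_mul_eq {y r : ℕ → ℝ} {k N : ℕ} (hkN : k < N)
    (hlt : ∀ i < k, r i = 1) (hgt : ∀ i, k < i → r i = 0) :
    ∑ i ∈ Finset.range N, (y (i + 1) - y i) * r i = y k - y 0 + (y (k + 1) - y k) * r k := by
  induction N, hkN using Nat.le_induction with
  | base =>
    rw [Finset.sum_range_succ, ← Finset.sum_range_sub,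
      Finset.sum_congr rfl fun i hi => by rw [hlt i (Finset.mem_range.1 hi), mul_one]]
  | succ N hN ih => rw [Finset.sum_range_succ, ih, hgt N hN, mul_zero, add_zero]

lemma exists_lt_mem_Icc_add_mul {A h u : ℝ} {N : ℕ} (hN : 0 < N)
    (hu : u ∈ Icc A (A + N * h)) : ∃ k < N, u ∈ Icc (A + k * h) (A + (k + 1) * h) := by
  induction N, hN using Nat.le_induction with
  | base => exact ⟨0, one_pos, by simpa using hu⟩
  | succ N hN ih =>
    by_cases huN : u ≤ A + N * h
    · obtain ⟨k, hk, hku⟩ := ih ⟨hu.1, huN⟩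
      exact ⟨k, hk.trans N.lt_succ_self, hku⟩
    · exact ⟨N, N.lt_succ_self, le_of_not_ge huN, by exact_mod_cast hu.2⟩

lemma sum_sub_mul_ramp_eq {A h u : ℝ} (hh : 0 < h) (y : ℕ → ℝ) {k N : ℕ} (hkN : k < N)
    (hu : u ∈ Icc (A + k * h) (A + (k + 1) * h)) :
    ∑ i ∈ Finset.range N, (y (i + 1) - y i) * ramp ((u - (A + i * h)) / h)
      = y k - y 0 + (y (k + 1) - y k) * ((u - (A + k * h)) / h) := by
  rw [sum_range_sub_mul_eq hkN, ramp_of_mem_Icc]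
  · rw [Set.mem_Icc, le_div_iff₀ hh, div_le_iff₀ hh]
    constructor <;> linarith [hu.1, hu.2]
  · intro i hi
    apply ramp_of_one_le
    rw [le_div_iff₀ hh]
    have : (i : ℝ) + 1 ≤ k := by exact_mod_cast hi
    nlinarith [hu.1]
  · intro i hi
    apply ramp_of_nonpos
    apply div_nonpos_of_nonpos_of_nonneg _ hh.le
    have : (k : ℝ) + 1 ≤ i := by exact_mod_cast hi
    nlinarith [hu.2]

lemma abs_interpolant_sub_lt {φ : ℝ → ℝ} {A h δ : ℝ} (hh : 0 < h) {N : ℕ} (hN : 0 < N)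
    (hφ : ∀ v ∈ Icc A (A + N * h), ∀ w ∈ Icc A (A + N * h), |v - w| ≤ h → |φ v - φ w| < δ / 2)
    {u : ℝ} (hu : u ∈ Icc A (A + N * h)) :
    |φ A + ∑ i ∈ Finset.range N, (φ (A + (i + 1 : ℕ) * h) - φ (A + i * h))
        * ramp ((u - (A + i * h)) / h) - φ u| < δ := by
  obtain ⟨k, hkN, hk⟩ := exists_lt_mem_Icc_add_mul hN hu
  have hnode : ∀ i ≤ N, A + i * h ∈ Icc A (A + N * h) := fun i hi => by
    have : (i : ℝ) ≤ N := by exact_mod_cast hi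
    constructor <;> nlinarith
  have hθ : |(u - (A + k * h)) / h| ≤ 1 := by
    rw [abs_le, le_div_iff₀ hh, div_le_iff₀ hh]
    constructor <;> linarith [hk.1, hk.2]
  have h₁ : |φ (A + k * h) - φ u| < δ / 2 := hφ _ (hnode k hkN.le) u hu (by
    rw [abs_sub_comm, abs_of_nonneg (by linarith [hk.1])]; linarith [hk.2])
  have h₂ : |φ (A + (k + 1 : ℕ) * h) - φ (A + k * h)| < δ / 2 :=
    hφ _ (hnode (k + 1) hkN) _ (hnode k hkN.le) (by push_cast; ring_nf; rw [abs_of_pos hh])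
  rw [sum_sub_mul_ramp_eq hh (fun i => φ (A + i * h)) hkN hk]
  calc _ = |(φ (A + k * h) - φ u) + (φ (A + (k + 1 : ℕ) * h) - φ (A + k * h))
          * ((u - (A + k * h)) / h)| := by simp only [Nat.cast_zero, zero_mul, add_zero]; ring_nf
    _ ≤ |φ (A + k * h) - φ u| + |φ (A + (k + 1 : ℕ) * h) - φ (A + k * h)| * 1 := by
        grw [abs_add_le, abs_mul, hθ]
    _ < δ := by linarith

theorem exists_mem_reluSpan_id_near {φ : ℝ → ℝ} {A B : ℝ} (hAB : A < B)
    (hφ : ContinuousOn φ (Icc A B)) {δ : ℝ} (hδ : 0 < δ) :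
    ∃ g ∈ reluSpan (ℝ ∙ ContinuousMap.id ℝ), ∀ u ∈ Icc A B, |g u - φ u| < δ := by
  obtain ⟨η, hη, hφη⟩ := Metric.uniformContinuousOn_iff.1
    (isCompact_Icc.uniformContinuousOn_of_continuous hφ) (δ / 2) (half_pos hδ)
  obtain ⟨N, hN⟩ := exists_nat_gt ((B - A) / η)
  have hN0 : (0 : ℝ) < N := (div_pos (sub_pos.2 hAB) hη).trans hN
  set h := (B - A) / N
  have hh : 0 < h := div_pos (sub_pos.2 hAB) hN0
  have hhη : h < η := by rwa [div_lt_iff₀ hN0, mul_comm, ← div_lt_iff₀ hη]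
  have hB : A + N * h = B := by simp only [h]; field_simp; ring
  set t : ℕ → ℝ := fun i => A + i * h
  refine ⟨φ A • reluRidge 0 1 + ∑ i ∈ Finset.range N, (φ (t (i + 1)) - φ (t i)) • rampAt (t i) h,
    add_mem (Submodule.smul_mem _ _ (reluRidge_mem_reluSpan (zero_mem _) 1))
      (sum_mem fun i _ => Submodule.smul_mem _ _ (rampAt_mem_reluSpan _ _)), fun u hu => ?_⟩
  simp only [ContinuousMap.add_apply, ContinuousMap.coe_sum, Finset.sum_apply,
    ContinuousMap.smul_apply, smul_eq_mul, rampAt_apply, reluRidge_apply,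
    ContinuousMap.zero_apply, zero_add, ReLU_of_nonneg zero_le_one, mul_one]
  rw [← hB] at hu
  exact abs_interpolant_sub_lt hh (Nat.cast_pos.1 hN0)
    (fun v hv w hw hvw => hφη v (hB ▸ hv) w (hB ▸ hw) (hvw.trans_lt hhη)) hu

section
variable {X : Type*} [TopologicalSpace X]

lemma comp_mem_reluSpan {L : Submodule ℝ C(X, ℝ)} {ℓ : C(X, ℝ)} (hℓ : ℓ ∈ L) {g : C(ℝ, ℝ)}
    (hg : g ∈ reluSpan (ℝ ∙ ContinuousMap.id ℝ)) : g.comp ℓ ∈ reluSpan L := by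
  refine Submodule.span_mono ?_ <| Submodule.apply_mem_span_image_of_mem_span
    (ContinuousMap.compRightAlgHom ℝ ℝ ℓ).toLinearMap hg
  rintro _ ⟨_, ⟨ℓ', hℓ', b, -, rfl⟩, rfl⟩
  obtain ⟨a, rfl⟩ := Submodule.mem_span_singleton.1 hℓ'
  exact ⟨a • ℓ, L.smul_mem a hℓ, b, mem_univ b, rfl⟩

theorem comp_mem_topologicalClosure_reluSpan [CompactSpace X] {L : Submodule ℝ C(X, ℝ)}
    {ℓ : C(X, ℝ)} (hℓ : ℓ ∈ L) (φ : C(ℝ, ℝ)) : φ.comp ℓ ∈ (reluSpan L).topologicalClosure := by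
  refine Metric.mem_closure_iff.2 fun ε hε => ?_
  obtain ⟨g, hg, hgφ⟩ := exists_mem_reluSpan_id_near (A := -‖ℓ‖) (B := ‖ℓ‖ + 1)
    (by linarith [norm_nonneg ℓ]) φ.continuous.continuousOn (half_pos hε)
  refine ⟨g.comp ℓ, comp_mem_reluSpan hℓ hg, ?_⟩
  calc dist (φ.comp ℓ) (g.comp ℓ) ≤ ε / 2 := (ContinuousMap.dist_le (half_pos hε).le).2 fun x => by
        have hx := abs_le.1 (ℓ.norm_coe_le_norm x)
        rw [Real.dist_eq, abs_sub_comm]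
        exact (hgφ (ℓ x) ⟨hx.1, by linarith [hx.2]⟩).le
    _ < ε := half_lt_self hε

noncomputable def expSubmonoid (L : Submodule ℝ C(X, ℝ)) : Submonoid C(X, ℝ) where
  carrier := (fun ℓ => (⟨Real.exp, Real.continuous_exp⟩ : C(ℝ, ℝ)).comp ℓ) '' L
  mul_mem' := by
    rintro _ _ ⟨ℓ₁, h₁, rfl⟩ ⟨ℓ₂, h₂, rfl⟩
    exact ⟨ℓ₁ + ℓ₂, L.add_mem h₁ h₂, by ext; simp [Real.exp_add]⟩
  one_mem' := ⟨0, L.zero_mem, by ext; simp⟩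

theorem dense_reluSpan [CompactSpace X] (L : Submodule ℝ C(X, ℝ))
    (hL : ∀ x y, x ≠ y → ∃ ℓ ∈ L, ℓ x ≠ ℓ y) : Dense (reluSpan L : Set C(X, ℝ)) := by
  set A := Algebra.adjoin ℝ (expSubmonoid L : Set C(X, ℝ))
  have hA : A.SeparatesPoints := by
    intro x y hxy
    obtain ⟨ℓ, hℓ, hne⟩ := hL x y hxy
    exact ⟨_, ⟨_, Algebra.subset_adjoin ⟨ℓ, hℓ, rfl⟩, rfl⟩, fun h => hne (Real.exp_injective h)⟩
  have hAL : (A : Set C(X, ℝ)) ⊆ closure (reluSpan L) := by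
    rw [← Subalgebra.coe_toSubmodule, Algebra.adjoin_eq_span, Submonoid.closure_eq,
      ← Submodule.topologicalClosure_coe, SetLike.coe_subset_coe, Submodule.span_le]
    rintro _ ⟨ℓ, hℓ, rfl⟩
    exact comp_mem_topologicalClosure_reluSpan hℓ _
  have hAdense : Dense (A : Set C(X, ℝ)) := by
    rw [dense_iff_closure_eq, ← Subalgebra.topologicalClosure_coe,
      ContinuousMap.subalgebra_topologicalClosure_eq_top_of_separatesPoints A hA, Algebra.coe_top]
  exact (hAdense.mono hAL).of_closure

end

section
variable {d : ℕ}

noncomputable def reluNet {n : ℕ} (α : Fin n → ℝ) (w : Fin n → Fin d → ℝ) (b : Fin n → ℝ)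
    (x : Fin d → ℝ) : ℝ :=
  ∑ j, α j * ReLU (∑ k, w j k * x k + b j)

@[fun_prop]
lemma continuous_reluNet {n : ℕ} (α : Fin n → ℝ) (w : Fin n → Fin d → ℝ) (b : Fin n → ℝ) :
    Continuous (reluNet α w b) := by
  unfold reluNet
  fun_prop

lemma reluNet_cons_zero {n : ℕ} (α : Fin n → ℝ) (w : Fin n → Fin d → ℝ) (b : Fin n → ℝ)
    (v : Fin d → ℝ) (c : ℝ) :
    reluNet (Fin.cons 0 α) (Fin.cons v w) (Fin.cons c b) = reluNet α w b := by
  ext x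
  simp [reluNet, Fin.sum_univ_succ]

def coordOn (K : Set (Fin d → ℝ)) (k : Fin d) : C(K, ℝ) :=
  ⟨fun x => (x : Fin d → ℝ) k, (continuous_apply k).comp continuous_subtype_val⟩

lemma exists_reluNet_eq_of_mem_reluSpan {K : Set (Fin d → ℝ)} {q : C(K, ℝ)}
    (hq : q ∈ reluSpan (Submodule.span ℝ (range (coordOn K)))) :
    ∃ (n : ℕ) (α : Fin n → ℝ) (w : Fin n → Fin d → ℝ) (b : Fin n → ℝ),
      ∀ x : K, reluNet α w b x = q x := by
  obtain ⟨n, α, u, rfl⟩ := Submodule.mem_span_set'.1 hq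
  choose ℓ hℓ b _ hu using fun j => (u j).2
  choose w hw using fun j => (Submodule.mem_span_range_iff_exists_fun ℝ).1 (hℓ j)
  refine ⟨n, α, w, b, fun x => ?_⟩
  simp [reluNet, ← hu, ← hw, coordOn]

theorem exists_reluNet_near {K : Set (Fin d → ℝ)} (hK : IsCompact K) {g : (Fin d → ℝ) → ℝ}
    (hg : Continuous g) {δ : ℝ} (hδ : 0 < δ) :
    ∃ (n : ℕ) (α : Fin n → ℝ) (w : Fin n → Fin d → ℝ) (b : Fin n → ℝ),
      ∀ x ∈ K, |reluNet α w b x - g x| < δ := by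
  have := isCompact_iff_compactSpace.1 hK
  have hsep : ∀ x y : K, x ≠ y → ∃ ℓ ∈ Submodule.span ℝ (range (coordOn K)), ℓ x ≠ ℓ y := by
    intro x y hxy
    obtain ⟨k, hk⟩ := Function.ne_iff.1 (Subtype.coe_ne_coe.2 hxy)
    exact ⟨coordOn K k, Submodule.subset_span (mem_range_self k), hk⟩
  obtain ⟨q, hq, hqg⟩ := (dense_reluSpan _ hsep).exists_dist_lt ⟨fun x => g x, by fun_prop⟩ hδ
  obtain ⟨n, α, w, b, hnet⟩ := exists_reluNet_eq_of_mem_reluSpan hq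
  refine ⟨n, α, w, b, fun x hx => ?_⟩
  rw [hnet ⟨x, hx⟩, ← Real.dist_eq, dist_comm]
  exact (ContinuousMap.dist_apply_le_dist ⟨x, hx⟩).trans_lt hqg

end

lemma setIntegral_abs_sub_le_of_forall_abs_sub_le {α : Type*} [MeasurableSpace α]
    {μ : Measure α} {s : Set α} (hs : MeasurableSet s) (hμs : μ s ≠ ⊤) {f g q : α → ℝ}
    (hf : IntegrableOn f s μ) (hg : IntegrableOn g s μ) (hq : IntegrableOn q s μ) {δ : ℝ}
    (hqg : ∀ x ∈ s, |q x - g x| ≤ δ) :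
    ∫ x in s, |q x - f x| ∂μ ≤ δ * μ.real s + ∫ x in s, |g x - f x| ∂μ := by
  have hδ : IntegrableOn (fun _ => δ) s μ := integrableOn_const hμs
  have hgf : IntegrableOn (fun x => |g x - f x|) s μ := (hg.sub hf).abs
  calc ∫ x in s, |q x - f x| ∂μ ≤ ∫ x in s, (δ + |g x - f x|) ∂μ :=
        setIntegral_mono_on (hq.sub hf).abs (hδ.add hgf) hs fun x hx => by
          linarith [abs_sub_le (q x) (g x) (f x), hqg x hx]
    _ = δ * μ.real s + ∫ x in s, |g x - f x| ∂μ := by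
        rw [integral_add hδ hgf, setIntegral_const, smul_eq_mul, mul_comm]

theorem relu_network_dense_L1_general
    (d : ℕ) (f : (Fin d → ℝ) → ℝ)
    (hf : IntegrableOn f (Set.Icc (0 : Fin d → ℝ) 1)) (ε : ℝ) (hε : 0 < ε) :
    ∃ (n : ℕ), 1 ≤ n ∧ ∃ (α : Fin n → ℝ) (w : Fin n → Fin d → ℝ) (b : Fin n → ℝ),
      ∫ x in Set.Icc (0 : Fin d → ℝ) 1,
        |(∑ j, α j * ReLU (∑ k, w j k * x k + b j)) - f x| < ε := by
  have hε3 : 0 < ε / 3 := by positivity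
  obtain ⟨g, -, hfg, hg, hgi⟩ := hf.exists_hasCompactSupport_integral_sub_le hε3
  obtain ⟨n, α, w, b, hnet⟩ := exists_reluNet_near isCompact_Icc hg hε3
  refine ⟨n + 1, Nat.le_add_left 1 n, Fin.cons 0 α, Fin.cons 0 w, Fin.cons 0 b, ?_⟩
  have hvol : volume.real (Icc (0 : Fin d → ℝ) 1) = 1 := by
    simp [measureReal_def, Real.volume_Icc_pi_toReal zero_le_one]
  calc ∫ x in Icc 0 1, |reluNet (Fin.cons 0 α) (Fin.cons 0 w) (Fin.cons 0 b) x - f x|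
      = ∫ x in Icc 0 1, |reluNet α w b x - f x| := by rw [reluNet_cons_zero]
    _ ≤ ε / 3 * volume.real (Icc (0 : Fin d → ℝ) 1) + ∫ x in Icc 0 1, |g x - f x| :=
        setIntegral_abs_sub_le_of_forall_abs_sub_le measurableSet_Icc measure_Icc_lt_top.ne hf
          hgi ((continuous_reluNet α w b).continuousOn.integrableOn_compact isCompact_Icc)
          fun x hx => (hnet x hx).le
    _ ≤ ε / 3 * 1 + ε / 3 := by
        rw [hvol]
        gcongr
        simpa only [Real.norm_eq_abs, abs_sub_comm] using hfg
    _ < ε := by linarith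

/-- **Universal approximation with ReLU in L¹.**
For every dimension `d ≥ 1`, every `f ∈ L¹(I_d)` (with `I_d = [0,1]^d`) and every `ε > 0`,
there is a single-hidden-layer ReLU network
`g x = ∑ j, α j * ReLU (⟪w j, x⟫ + b j)` with `∫_{I_d} |g x - f x| dx < ε`. -/
theorem relu_network_dense_L1
    (d : ℕ) (hd : 1 ≤ d) (f : (Fin d → ℝ) → ℝ)
    (hf : IntegrableOn f (Set.Icc (0 : Fin d → ℝ) 1)) (ε : ℝ) (hε : 0 < ε) :
    ∃ (n : ℕ), 1 ≤ n ∧ ∃ (α : Fin n → ℝ) (w : Fin n → Fin d → ℝ) (b : Fin n → ℝ),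
      ∫ x in Set.Icc (0 : Fin d → ℝ) 1,
        |(∑ j, α j * ReLU (∑ k, w j k * x k + b j)) - f x| < ε :=
  relu_network_dense_L1_general d f hf ε hε
end

section
/- For every d ≥ 1 and m ≥ 1, every vector-valued function f = (f_1, …, f_m) with each component f_i ∈ L¹(I_d), and every ε > 0, there exist an integer n ≥ 1, shared hidden-layer weights w_1, …, w_n ∈ ℝ^d and biases b_1, …, b_n ∈ ℝ, and output weights α_{ij} ∈ ℝ (1 ≤ i ≤ m, 1 ≤ j ≤ n), such that the multi-output ReLU network g_i(x) = Σ_{j=1}^n α_{ij} · ReLU(w_jᵀ x + b_j) satisfies Σ_{i=1}^m ∫_{I_d} |g_i(x) − f_i(x)| dx < ε. -/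
open MeasureTheory

/-!
A second difference of ReLUs is a hat function, and hats at equally spaced nodes form a partition
of unity; hence every continuous ridge function `x ↦ h (⟪w, x⟫)` is a uniform limit of networks on
a compact set. The exponential ridges `x ↦ exp ⟪w, x⟫` are closed under multiplication and
separate points, so by Stone–Weierstrass their span is uniformly dense in `C(K, ℝ)`, and therefore
so are networks. Continuous functions are dense in `L¹` of a finite measure, which gives each
output separately; the `m` outputs then share the finitely many hidden units used by any of them.
-/

open Set Finset

theorem Submodule.exists_fin_repr_of_forall_mem_span_range {R M α ι : Type*} [Semiring R]
    [AddCommMonoid M] [Module R M] [Nonempty α] [Fintype ι] {v : α → M} {x : ι → M}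
    (hx : ∀ i, x i ∈ span R (range v)) :
    ∃ n, 0 < n ∧ ∃ (p : Fin n → α) (c : ι → Fin n → R), ∀ i, ∑ j, c i j • v (p j) = x i := by
  classical
  choose c hc using fun i => Finsupp.mem_span_range_iff_exists_finsupp.mp (hx i)
  set T := insert (Classical.arbitrary α) (univ.biUnion fun i => (c i).support)
  refine ⟨T.card, T.card_pos.mpr (insert_nonempty _ _), fun j => T.equivFin.symm j,
    fun i j => c i (T.equivFin.symm j), fun i => ?_⟩
  rw [T.equivFin.symm.sum_comp (fun a : T => c i a • v a), T.sum_coe_sort (fun a => c i a • v a),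
    ← hc i, Finsupp.sum_of_support_subset (c i) ?_ (fun a r => r • v a) fun _ _ => zero_smul R _]
  exact (subset_biUnion_of_mem (fun i => (c i).support) (mem_univ i)).trans (subset_insert _ _)

theorem exists_mem_setIntegral_abs_sub_lt_of_forall_near {X : Type*} [TopologicalSpace X]
    [TopologicalSpace.MetrizableSpace X] [MeasurableSpace X] [BorelSpace X] {μ : Measure X}
    [IsFiniteMeasureOnCompacts μ]
    {K : Set X} (hK : IsCompact K) {V : Set C(X, ℝ)}
    (hV : ∀ φ : C(X, ℝ), ∀ δ > 0, ∃ g ∈ V, ∀ x ∈ K, |g x - φ x| < δ)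
    {f : X → ℝ} (hf : IntegrableOn f K μ) {ε : ℝ} (hε : 0 < ε) :
    ∃ g ∈ V, ∫ x in K, |g x - f x| ∂μ < ε := by
  have : IsFiniteMeasure (μ.restrict K) := isFiniteMeasure_restrict.mpr hK.measure_lt_top.ne
  obtain ⟨φ, hfφ, hφ⟩ := hf.exists_boundedContinuous_integral_sub_le (half_pos hε)
  set δ := ε / 2 / (μ.real K + 1)
  have hδ : 0 < δ := by positivity
  obtain ⟨g, hgV, hgφ⟩ := hV φ.toContinuousMap δ hδ
  have hg : IntegrableOn g K μ := g.continuous.continuousOn.integrableOn_compact hK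
  have hgφ_int : ∫ x in K, |g x - φ x| ∂μ ≤ δ * μ.real K := by
    refine (le_abs_self _).trans ?_
    simpa using norm_setIntegral_le_of_norm_le_const (f := fun x => |g x - φ x|)
      (hK.measure_lt_top (μ := μ)) fun x hx => by simpa using (hgφ x hx).le
  have hδK : δ * μ.real K < ε / 2 := by
    rw [div_mul_eq_mul_div, div_lt_iff₀ (by positivity)]
    nlinarith [measureReal_nonneg (μ := μ) (s := K)]
  refine ⟨g, hgV, ?_⟩
  calc ∫ x in K, |g x - f x| ∂μ ≤ ∫ x in K, (|g x - φ x| + ‖f x - φ x‖) ∂μ := by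
        refine integral_mono (hg.sub hf).abs ((hg.sub hφ).abs.add (hf.sub hφ).norm) fun x => ?_
        rw [Real.norm_eq_abs, abs_sub_comm (f x)]
        exact abs_sub_le _ _ _
    _ = ∫ x in K, |g x - φ x| ∂μ + ∫ x in K, ‖f x - φ x‖ ∂μ :=
        integral_add (hg.sub hφ).abs (hf.sub hφ).norm
    _ < ε := by linarith

noncomputable def hat (μ c t : ℝ) : ℝ :=
  (ReLU (t - c + μ) - 2 * ReLU (t - c) + ReLU (t - c - μ)) / μ

theorem hat_eq_max {μ : ℝ} (hμ : 0 < μ) (c t : ℝ) : hat μ c t = max 0 (1 - |t - c| / μ) := by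
  unfold hat ReLU
  rw [div_eq_iff hμ.ne', max_mul_of_nonneg _ _ hμ.le, sub_mul, div_mul_cancel₀ _ hμ.ne']
  grind

theorem hat_nonneg {μ : ℝ} (hμ : 0 < μ) (c t : ℝ) : 0 ≤ hat μ c t :=
  (hat_eq_max hμ c t).symm ▸ le_max_left _ _

theorem hat_eq_zero {μ c t : ℝ} (hμ : 0 < μ) (h : μ ≤ |t - c|) : hat μ c t = 0 := by
  rw [hat_eq_max hμ, max_eq_left (sub_nonpos.mpr ((one_le_div hμ).mpr h))]

theorem sum_hat_eq_one {μ a t : ℝ} (hμ : 0 < μ) {N : ℕ} (ht : t ∈ Icc a (a + N * μ)) :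
    ∑ j ∈ range (N + 1), hat μ (a + j * μ) t = 1 := by
  set v : ℕ → ℝ := fun i => ReLU (t - a - i * μ + μ)
  have hv : ∀ j : ℕ, hat μ (a + j * μ) t = ((v j - v (j + 1)) - (v (j + 1) - v (j + 2))) / μ := by
    intro j
    simp only [hat, v]
    push_cast
    ring_nf
  simp only [hv, ← sum_div, sum_sub_distrib, sum_range_sub' v, sum_range_sub' (fun i => v (i + 1))]
  simp only [v, ReLU]
  push_cast
  rw [div_eq_one_iff_eq hμ.ne']
  obtain ⟨hat, hta⟩ := ht
  rw [max_eq_left (by linarith), max_eq_right (by linarith), max_eq_left (by linarith),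
    max_eq_right (by linarith)]
  ring

theorem exists_hat_sum_near {h : ℝ → ℝ} {a b : ℝ} (hab : a < b) (hh : ContinuousOn h (Icc a b))
    {ε : ℝ} (hε : 0 < ε) : ∃ μ > 0, ∃ N : ℕ, ∀ t ∈ Icc a b,
      |∑ j ∈ range (N + 1), h (a + j * μ) * hat μ (a + j * μ) t - h t| < ε := by
  obtain ⟨δ, hδ, hδh⟩ := Metric.uniformContinuousOn_iff.mp
    (isCompact_Icc.uniformContinuousOn_of_continuous hh) (ε / 2) (by positivity)
  obtain ⟨N, hN⟩ := exists_nat_gt ((b - a) / δ)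
  have hN0 : (0 : ℝ) < N := lt_trans (by positivity) hN
  set μ := (b - a) / N
  have hμ : 0 < μ := div_pos (by linarith) hN0
  have hμδ : μ < δ := by rwa [div_lt_iff₀ hN0, mul_comm, ← div_lt_iff₀ hδ]
  have hNμ : N * μ = b - a := mul_div_cancel₀ _ hN0.ne'
  refine ⟨μ, hμ, N, fun t ht => ?_⟩
  have hnode : ∀ j ∈ range (N + 1), a + j * μ ∈ Icc a b := by
    intro j hj
    have hjN : (j : ℝ) ≤ N := by exact_mod_cast Nat.lt_succ_iff.mp (mem_range.mp hj)
    constructor <;> nlinarith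
  have hsum : ∑ j ∈ range (N + 1), hat μ (a + j * μ) t = 1 :=
    sum_hat_eq_one hμ (by rwa [hNμ, add_sub_cancel])
  have hterm : ∀ j ∈ range (N + 1),
      |(h (a + j * μ) - h t) * hat μ (a + j * μ) t| ≤ ε / 2 * hat μ (a + j * μ) t := by
    intro j hj
    rw [abs_mul, abs_of_nonneg (hat_nonneg hμ _ _)]
    by_cases hclose : |t - (a + j * μ)| < μ
    · refine mul_le_mul_of_nonneg_right (le_of_lt ?_) (hat_nonneg hμ _ _)
      rw [← Real.dist_eq]
      refine hδh _ (hnode j hj) _ ht ?_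
      rw [dist_comm, Real.dist_eq]
      exact hclose.trans hμδ
    · rw [hat_eq_zero hμ (not_lt.mp hclose), mul_zero, mul_zero]
  calc |∑ j ∈ range (N + 1), h (a + j * μ) * hat μ (a + j * μ) t - h t|
      = |∑ j ∈ range (N + 1), (h (a + j * μ) - h t) * hat μ (a + j * μ) t| := by
        simp only [sub_mul, sum_sub_distrib, ← mul_sum, hsum, mul_one]
    _ ≤ ∑ j ∈ range (N + 1), ε / 2 * hat μ (a + j * μ) t :=
        (abs_sum_le_sum_abs _ _).trans (sum_le_sum hterm)
    _ < ε := by rw [← mul_sum, hsum]; linarith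

section Networks

variable {d : ℕ}

noncomputable def reluUnit (w : Fin d → ℝ) (b : ℝ) : C(Fin d → ℝ, ℝ) :=
  ⟨fun x => ReLU (∑ k, w k * x k + b), by unfold ReLU; fun_prop⟩

variable (d) in
noncomputable def reluNetworks : Submodule ℝ C(Fin d → ℝ, ℝ) :=
  Submodule.span ℝ (range (Function.uncurry reluUnit))

theorem reluUnit_mem_reluNetworks (w : Fin d → ℝ) (b : ℝ) : reluUnit w b ∈ reluNetworks d :=
  Submodule.subset_span ⟨(w, b), rfl⟩

theorem exists_mem_reluNetworks_eq_hat_comp (w : Fin d → ℝ) (μ c : ℝ) :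
    ∃ g ∈ reluNetworks d, ∀ x, g x = hat μ c (∑ k, w k * x k) := by
  refine ⟨μ⁻¹ • (reluUnit w (μ - c) - 2 • reluUnit w (-c) + reluUnit w (-c - μ)),
    Submodule.smul_mem _ _ (add_mem (sub_mem (reluUnit_mem_reluNetworks _ _)
      (Submodule.smul_mem _ _ (reluUnit_mem_reluNetworks _ _))) (reluUnit_mem_reluNetworks _ _)),
    fun x => ?_⟩
  simp only [hat, reluUnit, ContinuousMap.smul_apply, ContinuousMap.add_apply,
    ContinuousMap.sub_apply, ContinuousMap.coe_mk, smul_eq_mul]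
  ring_nf

theorem exists_mem_reluNetworks_near_ridge {K : Set (Fin d → ℝ)} (hK : IsCompact K) {h : ℝ → ℝ}
    (hh : Continuous h) (w : Fin d → ℝ) {ε : ℝ} (hε : 0 < ε) :
    ∃ g ∈ reluNetworks d, ∀ x ∈ K, |g x - h (∑ k, w k * x k)| < ε := by
  obtain ⟨R, hR, hKR⟩ := (hK.image (f := fun x => ∑ k, w k * x k) (by fun_prop)).isBounded
    |>.subset_closedBall_lt 0 0
  obtain ⟨μ, -, N, hN⟩ := exists_hat_sum_near (neg_lt_self hR) hh.continuousOn hε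
  choose G hG hGeq using fun j : ℕ => exists_mem_reluNetworks_eq_hat_comp w μ (-R + j * μ)
  refine ⟨∑ j ∈ range (N + 1), h (-R + j * μ) • G j,
    Submodule.sum_mem _ fun j _ => Submodule.smul_mem _ _ (hG j), fun x hx => ?_⟩
  have hxR : ∑ k, w k * x k ∈ Icc (-R) R := by
    have := hKR (mem_image_of_mem _ hx)
    rwa [Metric.mem_closedBall, Real.dist_0_eq_abs, abs_le] at this
  simpa [hGeq] using hN _ hxR

noncomputable def expRidge (w : Fin d → ℝ) : C(Fin d → ℝ, ℝ) :=
  ⟨fun x => Real.exp (∑ k, w k * x k), by fun_prop⟩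

theorem expRidge_zero : expRidge (0 : Fin d → ℝ) = 1 := by
  ext x; simp [expRidge]

theorem expRidge_add (w w' : Fin d → ℝ) : expRidge (w + w') = expRidge w * expRidge w' := by
  ext x; simp [expRidge, add_mul, sum_add_distrib, Real.exp_add]

variable {K : Set (Fin d → ℝ)}

theorem toSubmodule_adjoin_range_expRidge_restrict :
    Subalgebra.toSubmodule (Algebra.adjoin ℝ (range fun w : Fin d → ℝ => (expRidge w).restrict K))
      = Submodule.span ℝ (range fun w : Fin d → ℝ => (expRidge w).restrict K) := by
  refine Algebra.adjoin_eq_span_of_subset ℝ (subset_trans ?_ Submodule.subset_span)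
  intro f hf
  induction hf using Submonoid.closure_induction with
  | mem f hf => exact hf
  | one => exact ⟨0, by simp only [expRidge_zero]; rfl⟩
  | mul f f' _ _ hf hf' =>
    obtain ⟨w, rfl⟩ := hf
    obtain ⟨w', rfl⟩ := hf'
    exact ⟨w + w', by simp only [expRidge_add]; rfl⟩

theorem separatesPoints_adjoin_range_expRidge_restrict :
    (Algebra.adjoin ℝ (range fun w : Fin d → ℝ => (expRidge w).restrict K)).SeparatesPoints := by
  intro x y hxy
  obtain ⟨k, hk⟩ := Function.ne_iff.mp (Subtype.val_injective.ne hxy)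
  refine ⟨_, ⟨(expRidge (Pi.single k 1)).restrict K, Algebra.subset_adjoin ⟨_, rfl⟩, rfl⟩, ?_⟩
  simpa [expRidge, Pi.single_apply] using hk

theorem exists_mem_reluNetworks_near (hK : IsCompact K) (φ : C(Fin d → ℝ, ℝ)) {ε : ℝ}
    (hε : 0 < ε) : ∃ g ∈ reluNetworks d, ∀ x ∈ K, |g x - φ x| < ε := by
  have := isCompact_iff_compactSpace.mp hK
  let W := ((reluNetworks d).map (ContinuousMap.compRightAlgHom ℝ ℝ
    ⟨((↑) : K → Fin d → ℝ), continuous_subtype_val⟩).toLinearMap).topologicalClosure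
  have hexp : ∀ w, (expRidge w).restrict K ∈ W := by
    refine fun w => Metric.mem_closure_iff.mpr fun δ hδ => ?_
    obtain ⟨g, hg, hgδ⟩ :=
      exists_mem_reluNetworks_near_ridge hK Real.continuous_exp w (half_pos hδ)
    refine ⟨g.restrict K, Submodule.mem_map_of_mem hg, lt_of_le_of_lt ?_ (half_lt_self hδ)⟩
    refine (ContinuousMap.dist_le (half_pos hδ).le).mpr fun x => ?_
    rw [Real.dist_eq, abs_sub_comm]
    exact (hgδ x x.2).le
  have hW : (Algebra.adjoin ℝ (range fun w => (expRidge w).restrict K) : Set C(K, ℝ)) ⊆ W := by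
    rw [← Subalgebra.coe_toSubmodule, toSubmodule_adjoin_range_expRidge_restrict]
    exact Submodule.span_le.mpr (range_subset_iff.mpr hexp)
  have hφ : φ.restrict K ∈ W := by
    have := closure_minimal hW (Submodule.isClosed_topologicalClosure _)
    rw [← Subalgebra.topologicalClosure_coe,
      ContinuousMap.subalgebra_topologicalClosure_eq_top_of_separatesPoints _
        separatesPoints_adjoin_range_expRidge_restrict] at this
    exact this trivial
  obtain ⟨_, ⟨g, hg, rfl⟩, hgφ⟩ := Metric.mem_closure_iff.mp hφ ε hε
  refine ⟨g, hg, fun x hx => ?_⟩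
  rw [abs_sub_comm, ← Real.dist_eq]
  exact (ContinuousMap.dist_lt_iff hε).mp hgφ ⟨x, hx⟩

end Networks

theorem multi_output_relu_network_dense_L1_general
    (d m : ℕ)
    (f : Fin m → (Fin d → ℝ) → ℝ)
    (hf : ∀ i, IntegrableOn (f i) (Set.Icc (0 : Fin d → ℝ) 1))
    (ε : ℝ) (hε : 0 < ε) :
    ∃ (n : ℕ), 1 ≤ n ∧ ∃ (w : Fin n → Fin d → ℝ) (b : Fin n → ℝ)
      (α : Fin m → Fin n → ℝ),
      ∑ i, ∫ x in Set.Icc (0 : Fin d → ℝ) 1,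
        |(∑ j, α i j * ReLU (∑ k, w j k * x k + b j)) - f i x| < ε := by
  have hεm : 0 < ε / (m + 1) := by positivity
  choose g hg hgf using fun i => exists_mem_setIntegral_abs_sub_lt_of_forall_near isCompact_Icc
    (fun φ δ hδ => exists_mem_reluNetworks_near isCompact_Icc φ hδ) (hf i) hεm
  obtain ⟨n, hn, p, c, hc⟩ := Submodule.exists_fin_repr_of_forall_mem_span_range hg
  refine ⟨n, hn, fun j => (p j).1, fun j => (p j).2, c, ?_⟩
  have hnet : ∀ i x, ∑ j, c i j * ReLU (∑ k, (p j).1 k * x k + (p j).2) = g i x := by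
    intro i x
    simp [← hc i, Function.uncurry, reluUnit]
  simp only [hnet]
  calc ∑ i, ∫ x in Icc 0 1, |g i x - f i x| ≤ ∑ _i : Fin m, ε / (m + 1) :=
        sum_le_sum fun i _ => (hgf i).le
    _ < ε := by
        rw [sum_const, card_univ, Fintype.card_fin, nsmul_eq_mul, mul_div_assoc',
          div_lt_iff₀ (by positivity)]
        linarith

/-- **Universal approximation with ReLU, multiple outputs.**
For every `d ≥ 1`, `m ≥ 1`, every vector-valued `f = (f_1, …, f_m)` with each component
in `L¹(I_d)`, and every `ε > 0`, there is a single-hidden-layer ReLU network with shared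
hidden weights/biases and output weights `α i j` whose outputs
`g i x = ∑ j, α i j * ReLU (⟪w j, x⟫ + b j)` satisfy
`∑ i, ∫_{I_d} |g i x - f i x| dx < ε`. -/
theorem multi_output_relu_network_dense_L1
    (d m : ℕ) (hd : 1 ≤ d) (hm : 1 ≤ m)
    (f : Fin m → (Fin d → ℝ) → ℝ)
    (hf : ∀ i, IntegrableOn (f i) (Set.Icc (0 : Fin d → ℝ) 1))
    (ε : ℝ) (hε : 0 < ε) :
    ∃ (n : ℕ), 1 ≤ n ∧ ∃ (w : Fin n → Fin d → ℝ) (b : Fin n → ℝ)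
      (α : Fin m → Fin n → ℝ),
      ∑ i, ∫ x in Set.Icc (0 : Fin d → ℝ) 1,
        |(∑ j, α i j * ReLU (∑ k, w j k * x k + b j)) - f i x| < ε :=
  multi_output_relu_network_dense_L1_general d m f hf ε hε
end

section
/- Let m ≥ 1, ε > 0, and let f = (f_1, …, f_m) be a measurable indicator function on I_d. Define f'(x) = (f'_1(x), …, f'_m(x)) with f'_i(x) = (2m/ε)·(f_i(x) − 0.5). Then for every i = 1, …, m, ∫_{I_d} |softmax(f'(x))_i − f_i(x)| dx ≤ ε/2. -/
open MeasureTheory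

/-- Softmax of a vector `y ∈ ℝ^m`: `softmax y i = exp (y i) / ∑ k, exp (y k)`. -/
noncomputable def softmax {m : ℕ} (y : Fin m → ℝ) (i : Fin m) : ℝ :=
  Real.exp (y i) / ∑ k, Real.exp (y k)

/-- `f = (f_1, …, f_m)` is an indicator function on `I_d = [0,1]^d` if each component takes
values in `{0, 1}` and the components sum to `1` at every point of `I_d`. -/
def IsIndicatorFunction {d m : ℕ} (f : Fin m → (Fin d → ℝ) → ℝ) : Prop :=
  ∀ x ∈ Set.Icc (0 : Fin d → ℝ) 1,
    (∀ i, f i x = 0 ∨ f i x = 1) ∧ (∑ i, f i x) = 1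

/-! An indicator vector is a standard basis vector `e_j`, and the scaling `c = 2m/ε` makes
coordinate `j` exceed all others by `c`. Every softmax coordinate is then within `m e^{-c}` of
`e_j`, and `m e^{-c} ≤ m / c = ε / 2`. The unit cube has volume one, so the pointwise bound
integrates to the same bound. -/

open Finset Real

section Softmax

variable {m : ℕ}

lemma softmax_nonneg (y : Fin m → ℝ) (i : Fin m) : 0 ≤ softmax y i := by
  unfold softmax
  positivity

lemma sum_softmax [NeZero m] (y : Fin m → ℝ) : ∑ i, softmax y i = 1 := by
  simp only [softmax, ← sum_div]
  exact div_self (sum_pos (fun k _ => exp_pos (y k)) univ_nonempty).ne'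

lemma softmax_le_exp_sub (y : Fin m → ℝ) (i j : Fin m) : softmax y i ≤ exp (y i - y j) := by
  rw [exp_sub]
  exact div_le_div_of_nonneg_left (exp_pos _).le (exp_pos _)
    (single_le_sum (fun k _ => (exp_pos (y k)).le) (mem_univ j))

lemma abs_softmax_sub_single_le (y : Fin m → ℝ) (i j : Fin m) :
    |softmax y i - (Pi.single j 1 : Fin m → ℝ) i| ≤ ∑ k ∈ univ.erase j, softmax y k := by
  have : NeZero m := ⟨j.pos.ne'⟩
  have hsum_nonneg : 0 ≤ ∑ k ∈ univ.erase j, softmax y k :=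
    sum_nonneg fun k _ => softmax_nonneg y k
  by_cases hij : i = j
  · subst hij
    have hrest : softmax y i + ∑ k ∈ univ.erase i, softmax y k = 1 := by
      rw [add_sum_erase _ _ (mem_univ i), sum_softmax]
    rw [Pi.single_eq_same, abs_sub_comm, abs_of_nonneg (by linarith)]
    linarith
  · rw [Pi.single_eq_of_ne hij, sub_zero, abs_of_nonneg (softmax_nonneg y i)]
    exact single_le_sum (fun k _ => softmax_nonneg y k) (mem_erase.2 ⟨hij, mem_univ i⟩)

lemma abs_softmax_sub_single_le_of_gap (y : Fin m → ℝ) (j : Fin m) (c : ℝ)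
    (hgap : ∀ k ≠ j, y k ≤ y j - c) (i : Fin m) :
    |softmax y i - (Pi.single j 1 : Fin m → ℝ) i| ≤ m * exp (-c) := by
  calc |softmax y i - (Pi.single j 1 : Fin m → ℝ) i| ≤ ∑ k ∈ univ.erase j, softmax y k :=
        abs_softmax_sub_single_le y i j
    _ ≤ ∑ _k ∈ univ.erase j, exp (-c) := by
        refine sum_le_sum fun k hk => (softmax_le_exp_sub y k j).trans ?_
        exact exp_le_exp.2 (by linarith [hgap k (ne_of_mem_erase hk)])
    _ = (univ.erase j).card * exp (-c) := by rw [sum_const, nsmul_eq_mul]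
    _ ≤ m * exp (-c) := by
        gcongr
        simp

end Softmax

lemma exists_eq_single_of_sum_eq_one {ι : Type*} [Fintype ι] [DecidableEq ι] {v : ι → ℝ}
    (h01 : ∀ i, v i = 0 ∨ v i = 1) (hsum : ∑ i, v i = 1) : ∃ j, v = Pi.single j 1 := by
  obtain ⟨j, hj⟩ : ∃ j, v j = 1 := by
    by_contra! h
    simp [fun k => (h01 k).resolve_right (h k)] at hsum
  have hrest : ∑ k ∈ univ.erase j, v k = 0 := by
    linarith [add_sum_erase univ v (mem_univ j)]
  have hnonneg : ∀ k ∈ univ.erase j, 0 ≤ v k := fun k _ => by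
    rcases h01 k with h | h <;> simp [h]
  have hzero := (sum_eq_zero_iff_of_nonneg hnonneg).1 hrest
  refine ⟨j, funext fun k => ?_⟩
  rcases eq_or_ne k j with rfl | hkj
  · simp [hj]
  · simp [hkj, hzero k (mem_erase.2 ⟨hkj, mem_univ k⟩)]

lemma mul_exp_neg_two_mul_div_le (a : ℝ) {ε : ℝ} (hε : 0 < ε) :
    a * exp (-(2 * a / ε)) ≤ ε / 2 := by
  have ha : a = ε / 2 * (2 * a / ε) := by field_simp
  have hmul : 2 * a / ε * exp (-(2 * a / ε)) ≤ 1 :=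
    (mul_exp_neg_le_exp_neg_one _).trans (exp_le_one_iff.2 (by norm_num))
  rw [ha, mul_assoc, ← ha]
  exact mul_le_of_le_one_right (by positivity) hmul

lemma abs_softmax_scaled_indicator_sub_le {m : ℕ} {ε : ℝ} (hε : 0 < ε) {v : Fin m → ℝ}
    (h01 : ∀ i, v i = 0 ∨ v i = 1) (hsum : ∑ i, v i = 1) (i : Fin m) :
    |softmax (fun k => (2 * (m : ℝ) / ε) * (v k - 0.5)) i - v i| ≤ ε / 2 := by
  obtain ⟨j, rfl⟩ := exists_eq_single_of_sum_eq_one h01 hsum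
  refine (abs_softmax_sub_single_le_of_gap _ j (2 * m / ε) (fun k hk => ?_) i).trans
    (mul_exp_neg_two_mul_div_le _ hε)
  simp only [Pi.single_eq_of_ne hk, Pi.single_eq_same]
  linarith

theorem softmax_of_scaled_indicator_close_general
    (d m : ℕ)
    (f : Fin m → (Fin d → ℝ) → ℝ)
    (hind : IsIndicatorFunction f)
    (ε : ℝ) (hε : 0 < ε) :
    ∀ i, ∫ x in Set.Icc (0 : Fin d → ℝ) 1,
      |softmax (fun i' => (2 * (m : ℝ) / ε) * (f i' x - 0.5)) i - f i x| ≤ ε / 2 := by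
  intro i
  have hvol : volume (Set.Icc (0 : Fin d → ℝ) 1) = 1 := by simp [Real.volume_Icc_pi]
  refine (le_norm_self _).trans ?_
  calc _ ≤ ε / 2 * volume.real (Set.Icc (0 : Fin d → ℝ) 1) :=
        norm_setIntegral_le_of_norm_le_const (by simp [hvol]) fun x hx => by
          simpa using abs_softmax_scaled_indicator_sub_le hε (hind x hx).1 (hind x hx).2 i
    _ = ε / 2 := by simp [measureReal_def, hvol]

/-- **Softmax of a rescaled indicator function is close to the indicator in `L¹(I_d)`.**
Let `m ≥ 1`, `ε > 0`, and `f` a measurable indicator function on `I_d`.  With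
`f'_i x = (2m/ε) * (f_i x - 0.5)`, we have for every `i`:
`∫_{I_d} |softmax (f' x) i - f i x| dx ≤ ε / 2`. -/
theorem softmax_of_scaled_indicator_close
    (d m : ℕ) (hm : 1 ≤ m)
    (f : Fin m → (Fin d → ℝ) → ℝ)
    (hfmeas : ∀ i, Measurable (f i))
    (hind : IsIndicatorFunction f)
    (ε : ℝ) (hε : 0 < ε) :
    ∀ i, ∫ x in Set.Icc (0 : Fin d → ℝ) 1,
      |softmax (fun i' => (2 * (m : ℝ) / ε) * (f i' x - 0.5)) i - f i x| ≤ ε / 2 :=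
  softmax_of_scaled_indicator_close_general d m f hind ε hε
end
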